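/- Let m ≥ 0, m' ≥ 0 and i ≥ 1 be integers, and let h, h' ∈ ℚ[t]. Suppose there exist nonnegative rational numbers g_0, …, g_{⌊(m+1)/2⌋} with h(t) = ∑_{j} g_j t^j P_{m−2j,i}(t) and nonnegative rational numbers g'_0, …, g'_{⌊(m'+1)/2⌋} with h'(t) = ∑_{j} g'_j t^j P_{m'−2j,i}(t). Then there exist nonnegative rational numbers g''_0, …, g''_{⌊(m+m'+2)/2⌋} with h(t)·h'(t) = ∑_{j} g''_j t^j P_{m+m'+1−2j,i}(t). -/

import Mathlib

/-!
Write `R_n = 1 + t + ⋯ + t^n`. Then `P_{qi+s-1,i} = R_i^q R_s` for `0 ≤ s ≤ i`, so the product of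
two basis elements is `t^{j+j'} R_i^{q+q'} R_s R_{s'}`. The cone spanned by `B_{D,i}` is carried
into the cone of `B_{D+2k,i}` by multiplication by `t^k` and into that of `B_{D+i,i}` by
multiplication by `R_i`, so it suffices to put `R_s R_{s'}` into the cone of `B_{s+s'-1,i}`.
This follows from the identity `R_{n+u+1} R_{n+v+1} = R_n R_{n+u+v+2} + t^{n+1} R_u R_v`:
with `n = 0` it splits off `R_{s+s'} = P_{s+s'-1,i}` when `s + s' ≤ i` and leaves a shorter
product, and with `n + u + v + 2 = i` it splits off `R_n R_i = P_{s+s'-1,i}` otherwise.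
-/

open Polynomial Finset

/-- The polynomial `P_{d,i}(t)`, here with rational coefficients: `P_{d,i} = 1` for `d < 0`
(in particular `P_{-1,i} = 1`), and for `d ≥ 0`,
`P_{d,i} = (1 + t + ⋯ + t^i)^q (1 + t + ⋯ + t^r)` where `q ≥ 0` and `1 ≤ r ≤ i` are the
unique integers with `d + 1 = q·i + r` (for `i ≥ 1`, `q = ⌊d/i⌋` and `r = (d mod i) + 1`). -/
noncomputable def Ppoly (d : ℤ) (i : ℕ) : ℚ[X] :=
  if d < 0 then 1
  else (∑ k ∈ range (i + 1), X ^ k) ^ (d.toNat / i) *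
    (∑ k ∈ range (d.toNat % i + 2), X ^ k)

noncomputable def geomSum (n : ℕ) : ℚ[X] := ∑ k ∈ range (n + 1), X ^ k

lemma geomSum_mul_X_sub_one (n : ℕ) : geomSum n * (X - 1) = X ^ (n + 1) - 1 :=
  geom_sum_mul X (n + 1)

lemma geomSum_mul_geomSum (n u v : ℕ) :
    geomSum (n + u + 1) * geomSum (n + v + 1) =
      geomSum n * geomSum (n + u + v + 2) + X ^ (n + 1) * (geomSum u * geomSum v) := by
  have hX : (X - 1 : ℚ[X]) ^ 2 ≠ 0 := pow_ne_zero 2 (by simpa using X_sub_C_ne_zero (1 : ℚ))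
  refine mul_right_cancel₀ hX ?_
  linear_combination
    (geomSum (n + v + 1) * (X - 1)) * geomSum_mul_X_sub_one (n + u + 1)
    + (X ^ (n + u + 2) - 1) * geomSum_mul_X_sub_one (n + v + 1)
    - (geomSum (n + u + v + 2) * (X - 1)) * geomSum_mul_X_sub_one n
    - (X ^ (n + 1) - 1) * geomSum_mul_X_sub_one (n + u + v + 2)
    - (X ^ (n + 1) * geomSum v * (X - 1)) * geomSum_mul_X_sub_one u
    - (X ^ (n + 1) * (X ^ (u + 1) - 1)) * geomSum_mul_X_sub_one v

lemma Ppoly_eq_geomSum {i : ℕ} (hi : 1 ≤ i) (q : ℕ) {s : ℕ} (hs : s ≤ i) :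
    Ppoly ((q * i + s : ℕ) - 1) i = geomSum i ^ q * geomSum s := by
  have pos_case : ∀ q s, 1 ≤ s → s ≤ i →
      Ppoly ((q * i + s : ℕ) - 1) i = geomSum i ^ q * geomSum s := by
    intro q s hs1 hs
    have htoNat : (((q * i + s : ℕ) : ℤ) - 1).toNat = (s - 1) + q * i := by omega
    rw [Ppoly, if_neg (by omega), htoNat, Nat.add_mul_div_right _ _ hi,
      Nat.add_mul_mod_self_right, Nat.div_eq_of_lt (by omega), Nat.mod_eq_of_lt (by omega),
      zero_add, show s - 1 + 2 = s + 1 by omega]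
    rfl
  rcases Nat.eq_zero_or_pos s with rfl | hs1
  · rcases q with _ | q
    · simp [Ppoly, geomSum]
    · rw [show (q + 1) * i + 0 = q * i + i by ring, pos_case q i hi le_rfl, pow_succ,
        show geomSum 0 = 1 by simp [geomSum], mul_one]
  · exact pos_case q s hs1 hs

lemma geomSum_eq_Ppoly {i s : ℕ} (hi : 1 ≤ i) (hs : s ≤ i) : geomSum s = Ppoly (s - 1) i := by
  simpa using (Ppoly_eq_geomSum hi 0 hs).symm

lemma exists_eq_mul_add_sub_one {i : ℕ} (hi : 1 ≤ i) {d : ℤ} (hd : -1 ≤ d) :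
    ∃ q s : ℕ, s ≤ i ∧ d = ((q * i + s : ℕ) : ℤ) - 1 :=
  ⟨(d + 1).toNat / i, (d + 1).toNat % i, (Nat.mod_lt _ hi).le,
    by rw [Nat.div_add_mod']; omega⟩

lemma Ppoly_add_self {i : ℕ} (hi : 1 ≤ i) {d : ℤ} (hd : -1 ≤ d) :
    Ppoly (d + i) i = geomSum i * Ppoly d i := by
  obtain ⟨q, s, hs, rfl⟩ := exists_eq_mul_add_sub_one hi hd
  rw [show ((q * i + s : ℕ) : ℤ) - 1 + i = ((q + 1) * i + s : ℕ) - 1 by push_cast; ring,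
    Ppoly_eq_geomSum hi _ hs, Ppoly_eq_geomSum hi _ hs, pow_succ']
  ring

/-- The conical hull of `B_{D,i}`; the sum runs over the `j ≥ 0` with `2j ≤ D + 1`, an empty
range when `D < -1`. -/
def basisCone (D : ℤ) (i : ℕ) : PointedCone ℚ ℚ[X] where
  carrier := {p | ∃ g : ℕ → ℚ, (∀ j, 0 ≤ g j) ∧
    p = ∑ j ∈ range ((D + 1) / 2 + 1).toNat, C (g j) * X ^ j * Ppoly (D - 2 * j) i}
  add_mem' := by
    rintro _ _ ⟨g, hg, rfl⟩ ⟨g', hg', rfl⟩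
    refine ⟨g + g', fun j => add_nonneg (hg j) (hg' j), ?_⟩
    simp only [Pi.add_apply, C_add, add_mul, sum_add_distrib]
  zero_mem' := ⟨0, fun _ => le_rfl, by simp⟩
  smul_mem' := by
    rintro ⟨c, hc⟩ _ ⟨g, hg, rfl⟩
    refine ⟨c • g, fun j => mul_nonneg hc (hg j), ?_⟩
    simp only [Nonneg.mk_smul, smul_eq_C_mul, mul_sum, Pi.smul_apply, smul_eq_mul, C_mul,
      mul_assoc]

lemma X_pow_mul_Ppoly_mem_basisCone {D : ℤ} {i j : ℕ} (hj : 2 * (j : ℤ) ≤ D + 1) :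
    X ^ j * Ppoly (D - 2 * j) i ∈ basisCone D i := by
  refine ⟨Pi.single j 1, fun k => ?_, ?_⟩
  · by_cases hk : k = j <;> simp [hk]
  · rw [sum_eq_single_of_mem j (mem_range.2 (by omega)) fun k _ hk => by simp [hk]]
    simp

lemma mul_mem_basisCone {D D' : ℤ} {i : ℕ} {q p : ℚ[X]}
    (hq : ∀ j : ℕ, 2 * (j : ℤ) ≤ D + 1 → q * (X ^ j * Ppoly (D - 2 * j) i) ∈ basisCone D' i)
    (hp : p ∈ basisCone D i) : q * p ∈ basisCone D' i := by
  obtain ⟨g, hg, rfl⟩ := hp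
  rw [mul_sum]
  refine Submodule.sum_mem _ fun j hj => ?_
  have hmem := Submodule.smul_mem _ (⟨g j, hg j⟩ : {c : ℚ // 0 ≤ c})
    (hq j (by have := mem_range.1 hj; omega))
  rwa [Nonneg.mk_smul, smul_eq_C_mul, mul_left_comm, ← mul_assoc (C _)] at hmem

lemma X_pow_mul_mem_basisCone {D : ℤ} {i : ℕ} {p : ℚ[X]} (k : ℕ) (hp : p ∈ basisCone D i) :
    X ^ k * p ∈ basisCone (D + 2 * k) i := by
  refine mul_mem_basisCone (fun j hj => ?_) hp
  rw [← mul_assoc, ← pow_add, show D - 2 * j = D + 2 * k - 2 * ((k + j : ℕ) : ℤ) by push_cast; ring]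
  exact X_pow_mul_Ppoly_mem_basisCone (by push_cast; omega)

lemma geomSum_pow_mul_mem_basisCone {D : ℤ} {i : ℕ} (hi : 1 ≤ i) {p : ℚ[X]} (Q : ℕ)
    (hp : p ∈ basisCone D i) : geomSum i ^ Q * p ∈ basisCone (D + Q * i) i := by
  induction Q with
  | zero => simpa using hp
  | succ Q ih =>
    rw [pow_succ', mul_assoc, show D + ((Q + 1 : ℕ) : ℤ) * i = D + Q * i + i by push_cast; ring]
    refine mul_mem_basisCone (fun j hj => ?_) ih
    rw [mul_left_comm, ← Ppoly_add_self hi (by omega), sub_add_eq_add_sub]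
    exact X_pow_mul_Ppoly_mem_basisCone (by omega)

lemma Ppoly_mem_basisCone {D : ℤ} (i : ℕ) (hD : -1 ≤ D) : Ppoly D i ∈ basisCone D i := by
  simpa using X_pow_mul_Ppoly_mem_basisCone (D := D) (i := i) (j := 0) (by omega)

lemma geomSum_mul_geomSum_mem_basisCone_of_add_le {i : ℕ} (hi : 1 ≤ i) {s s' : ℕ}
    (h : s + s' ≤ i) : geomSum s * geomSum s' ∈ basisCone ((s : ℤ) + s' - 1) i := by
  induction s generalizing s' with
  | zero =>
    rw [show geomSum 0 = 1 by simp [geomSum], one_mul, geomSum_eq_Ppoly hi (by omega)]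
    simpa using Ppoly_mem_basisCone i (D := s' - 1) (by omega)
  | succ a ih =>
    rcases s' with _ | b
    · rw [show geomSum 0 = 1 by simp [geomSum], mul_one, geomSum_eq_Ppoly hi h]
      simpa using Ppoly_mem_basisCone i (D := (a + 1 : ℕ) - 1) (by omega)
    · have hsplit := geomSum_mul_geomSum 0 a b
      simp only [zero_add, show geomSum 0 = 1 by simp [geomSum], one_mul] at hsplit
      rw [hsplit]
      refine add_mem ?_ ?_
      · rw [geomSum_eq_Ppoly hi (by omega)]
        convert Ppoly_mem_basisCone i (D := ((a + b + 2 : ℕ) : ℤ) - 1) (by omega) using 2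
        push_cast; ring
      · convert X_pow_mul_mem_basisCone 1 (ih (s' := b) (by omega)) using 2
        push_cast; ring

lemma geomSum_mul_geomSum_mem_basisCone {i : ℕ} (hi : 1 ≤ i) {s s' : ℕ} (hs : s ≤ i)
    (hs' : s' ≤ i) : geomSum s * geomSum s' ∈ basisCone ((s : ℤ) + s' - 1) i := by
  by_cases h : s + s' ≤ i
  · exact geomSum_mul_geomSum_mem_basisCone_of_add_le hi h
  have top_mem : ∀ t ≤ i, geomSum i * geomSum t ∈ basisCone ((i : ℤ) + t - 1) i := by
    intro t ht
    rw [← pow_one (geomSum i), ← Ppoly_eq_geomSum hi 1 ht]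
    simpa using Ppoly_mem_basisCone i (D := i + t - 1) (by omega)
  rcases eq_or_lt_of_le hs with rfl | hs
  · exact top_mem s' hs'
  rcases eq_or_lt_of_le hs' with rfl | hs'
  · rw [mul_comm, add_comm]; exact top_mem s hs.le
  obtain ⟨n, u, v, rfl, rfl, hi_eq⟩ : ∃ n u v : ℕ, s = n + u + 1 ∧ s' = n + v + 1 ∧
      i = n + u + v + 2 := ⟨s + s' - i, i - 1 - s', i - 1 - s, by omega, by omega, by omega⟩
  rw [geomSum_mul_geomSum, ← hi_eq, mul_comm (geomSum n)]
  refine add_mem ?_ ?_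
  · convert top_mem n (by omega) using 2
    push_cast; omega
  · convert X_pow_mul_mem_basisCone (n + 1)
      (geomSum_mul_geomSum_mem_basisCone_of_add_le hi (s := u) (s' := v) (by omega)) using 2
    push_cast; ring

lemma Ppoly_mul_Ppoly_mem_basisCone {i : ℕ} (hi : 1 ≤ i) {a b : ℤ} (ha : -1 ≤ a) (hb : -1 ≤ b) :
    Ppoly a i * Ppoly b i ∈ basisCone (a + b + 1) i := by
  obtain ⟨q, s, hs, rfl⟩ := exists_eq_mul_add_sub_one hi ha
  obtain ⟨q', s', hs', rfl⟩ := exists_eq_mul_add_sub_one hi hb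
  rw [Ppoly_eq_geomSum hi q hs, Ppoly_eq_geomSum hi q' hs',
    show geomSum i ^ q * geomSum s * (geomSum i ^ q' * geomSum s') =
      geomSum i ^ (q + q') * (geomSum s * geomSum s') by ring]
  convert geomSum_pow_mul_mem_basisCone hi (q + q')
    (geomSum_mul_geomSum_mem_basisCone hi hs hs') using 2
  push_cast; ring

/-- if `h` is a nonnegative rational combination of the basis
`B_{m,i} = (t^j P_{m-2j,i})_j` and `h'` is a nonnegative rational combination of `B_{m',i}`,
then `h·h'` is a nonnegative rational combination of `B_{m+m'+1,i}`; i.e. nonnegativity of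
`g^{(m,i)}(h)` and `g^{(m',i)}(h')` implies nonnegativity of `g^{(m+m'+1,i)}(h·h')`. -/
theorem g_vector_join (m m' i : ℕ) (hi : 1 ≤ i) (h h' : ℚ[X])
    (hg : ∃ g : ℕ → ℚ, (∀ j, 0 ≤ g j) ∧
      h = ∑ j ∈ range ((m + 1) / 2 + 1),
        C (g j) * X ^ j * Ppoly ((m : ℤ) - 2 * j) i)
    (hg' : ∃ g' : ℕ → ℚ, (∀ j, 0 ≤ g' j) ∧
      h' = ∑ j ∈ range ((m' + 1) / 2 + 1),
        C (g' j) * X ^ j * Ppoly ((m' : ℤ) - 2 * j) i) :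
    ∃ g'' : ℕ → ℚ, (∀ j, 0 ≤ g'' j) ∧
      h * h' = ∑ j ∈ range ((m + m' + 2) / 2 + 1),
        C (g'' j) * X ^ j * Ppoly ((m : ℤ) + m' + 1 - 2 * j) i := by
  have hN : ∀ n : ℕ, (((n : ℤ) + 1) / 2 + 1).toNat = (n + 1) / 2 + 1 := by omega
  have hh : h ∈ basisCone m i := by rw [← hN] at hg; exact hg
  have hh' : h' ∈ basisCone m' i := by rw [← hN] at hg'; exact hg'
  have hprod : h * h' ∈ basisCone ((m : ℤ) + m' + 1) i := by
    rw [mul_comm]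
    refine mul_mem_basisCone (fun j hj => ?_) hh
    rw [mul_comm]
    refine mul_mem_basisCone (fun j' hj' => ?_) hh'
    rw [show X ^ j * Ppoly (m - 2 * j) i * (X ^ j' * Ppoly (m' - 2 * j') i) =
      X ^ (j + j') * (Ppoly (m - 2 * j) i * Ppoly (m' - 2 * j') i) by ring]
    convert X_pow_mul_mem_basisCone (j + j')
      (Ppoly_mul_Ppoly_mem_basisCone hi (a := m - 2 * j) (b := m' - 2 * j') (by omega) (by omega)) using 2
    push_cast; ring
  obtain ⟨g'', hg'', e⟩ := hprod
  exact ⟨g'', hg'', by rwa [show (((m : ℤ) + m' + 1 + 1) / 2 + 1).toNat = (m + m' + 2) / 2 + 1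
    by omega] at e⟩
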